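/- Let H=(V,E,w) be a directed hypergraph with weighted-degree vertex weights ω, suppose ω_u > 0 for every u ∈ V and |V| ≥ 2. Then there exists a nonempty proper subset S ⊂ V with ω(S) ≤ ω(V)/2 such that φ(S) ≤ 2·√γ₂. In particular, φ_H ≤ 2√γ₂, where φ_H := min{ φ(S) : ∅ ≠ S ⊂ V, ω(S) ≤ ω(V)/2 }. -/

import Mathlib

open Finset
open scoped Classical

noncomputable section

structure DirHyp (V E : Type) [Fintype V] [Fintype E] where
  Tl : E → Finset V
  Hd : E → Finset V
  w : E → ℝ
  Tl_ne : ∀ e, (Tl e).Nonempty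
  Hd_ne : ∀ e, (Hd e).Nonempty
  w_nonneg : ∀ e, 0 ≤ w e

variable {V E : Type} [Fintype V] [DecidableEq V] [Fintype E]

/-- Discrepancy of edge `e` w.r.t. density `f`. -/
def disc (G : DirHyp V E) (f : V → ℝ) (e : E) : ℝ :=
  (G.Tl e).sup' (G.Tl_ne e) f - (G.Hd e).inf' (G.Hd_ne e) f

/-- Weighted degree of vertex `u`. -/
def vw (G : DirHyp V E) (u : V) : ℝ :=
  ∑ e : E, if u ∈ G.Tl e ∪ G.Hd e then G.w e else 0

/-- Total weight of a vertex subset. -/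
def wS (G : DirHyp V E) (S : Finset V) : ℝ := ∑ u ∈ S, vw G u

/-- Discrepancy ratio. -/
def discRatio (G : DirHyp V E) (f : V → ℝ) : ℝ :=
  (∑ e : E, G.w e * (max (disc G f e) 0) ^ 2) / (∑ u : V, vw G u * (f u) ^ 2)

/-- `γ₂`. -/
def gamma2 (G : DirHyp V E) : ℝ :=
  sInf {x : ℝ | ∃ f : V → ℝ, f ≠ 0 ∧ (∑ u : V, vw G u * f u) = 0 ∧ x = discRatio G f}

def outCut (G : DirHyp V E) (S : Finset V) : Finset E :=
  Finset.univ.filter fun e => (G.Tl e ∩ S).Nonempty ∧ (G.Hd e ∩ Sᶜ).Nonempty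

def inCut (G : DirHyp V E) (S : Finset V) : Finset E :=
  Finset.univ.filter fun e => (G.Tl e ∩ Sᶜ).Nonempty ∧ (G.Hd e ∩ S).Nonempty

def phiPlus (G : DirHyp V E) (S : Finset V) : ℝ := (∑ e ∈ outCut G S, G.w e) / wS G S

def phiMinus (G : DirHyp V E) (S : Finset V) : ℝ := (∑ e ∈ inCut G S, G.w e) / wS G S

def phi (G : DirHyp V E) (S : Finset V) : ℝ := min (phiPlus G S) (phiMinus G S)

/-!
Take `f ⊥ ω` with `f ≠ 0` and shift it by a weighted median `c`. Discrepancies are invariant under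
the shift and, by orthogonality, `Σ ω (f - c)² = Σ ω f² + c² ω(V)`, so `g = f - c` has ratio at
most `D(f)`. Edgewise, `([Δ(g⁺)]⁺)² + ([Δ'(g⁻)]⁺)² ≤ ([Δ(g)]⁺)²`, where `Δ'` is the
discrepancy of the reversed hypergraph, and `g² = (g⁺)² + (g⁻)²`; hence `g⁺` (for `H`) or `g⁻`
(for the reverse, whose out-cuts are the in-cuts of `H`) has ratio at most `D(f)`, and it is
supported on one side of the median, of weight at most `ω(V)/2`.

For `h ≥ 0` let `S` minimise `φ⁺` among the nonempty subsets of the support of `h`, so that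
`w(∂⁺S_t) ≥ φ⁺(S) ω(S_t)` for every superlevel set `S_t = {h² > t}`. Integrating in `t`,
`∫ ω(S_t) = Σ ω h²` and `∫ w(∂⁺S_t) ≤ Σ_e w_e (A_e² - B_e²)⁺` with `A_e = max_{T_e} h`,
`B_e = min_{H_e} h`; writing `A² - B² = (A - B)(A + B)` and using Cauchy–Schwarz together with
`(A + B)² ≤ 4 Σ_{T_e ∪ H_e} h²` gives `φ⁺(S) ≤ 2 √D(h)`.
-/

section Order

variable {ι α β : Type*} [LinearOrder α] [LinearOrder β] {s : Finset ι}

theorem Antitone.finset_sup'_comp {g : α → β} (hg : Antitone g) (hs : s.Nonempty) (f : ι → α) :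
    s.sup' hs (g ∘ f) = g (s.inf' hs f) := by
  obtain ⟨i, hi, hfi⟩ := s.exists_mem_eq_inf' hs f
  refine le_antisymm (Finset.sup'_le _ _ fun j hj => hg (Finset.inf'_le f hj)) ?_
  rw [hfi]
  exact Finset.le_sup' (g ∘ f) hi

theorem Antitone.finset_inf'_comp {g : α → β} (hg : Antitone g) (hs : s.Nonempty) (f : ι → α) :
    s.inf' hs (g ∘ f) = g (s.sup' hs f) := by
  obtain ⟨i, hi, hfi⟩ := s.exists_mem_eq_sup' hs f
  refine le_antisymm ?_ (Finset.le_inf' _ _ fun j hj => hg (Finset.le_sup' f hj))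
  rw [hfi]
  exact Finset.inf'_le (g ∘ f) hi

end Order

theorem exists_weighted_median {α : Type*} [Fintype α] [Nonempty α] (μ : α → ℝ)
    (hμ : ∀ a, 0 ≤ μ a) (f : α → ℝ) :
    ∃ c, ∑ a with c < f a, μ a ≤ (∑ a, μ a) / 2 ∧ ∑ a with f a < c, μ a ≤ (∑ a, μ a) / 2 := by
  set W := ∑ a, μ a
  have hW : 0 ≤ W := Finset.sum_nonneg fun a _ => hμ a
  have hne : (univ.filter fun a => W / 2 ≤ ∑ b with f b ≤ f a, μ b).Nonempty := by
    obtain ⟨a, ha⟩ := Finite.exists_max f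
    refine ⟨a, Finset.mem_filter.2 ⟨Finset.mem_univ a, ?_⟩⟩
    rw [Finset.filter_true_of_mem fun b _ => ha b]
    linarith
  obtain ⟨a₀, ha₀, hmin⟩ := Finset.exists_min_image _ f hne
  refine ⟨f a₀, ?_, ?_⟩
  · have hsplit := Finset.sum_filter_add_sum_filter_not univ (fun a => f a ≤ f a₀) μ
    simp only [not_le] at hsplit
    linarith [(Finset.mem_filter.mp ha₀).2]
  · by_contra! hlarge
    have hlow : (univ.filter fun a => f a < f a₀).Nonempty := by
      by_contra! hempty
      rw [hempty, Finset.sum_empty] at hlarge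
      linarith
    obtain ⟨a₁, ha₁, hmax⟩ := Finset.exists_max_image _ f hlow
    have hle : ∑ a with f a < f a₀, μ a ≤ ∑ a with f a ≤ f a₁, μ a :=
      Finset.sum_le_sum_of_subset_of_nonneg
        (fun a ha => Finset.mem_filter.mpr ⟨Finset.mem_univ a, hmax a ha⟩) fun a _ _ => hμ a
    have := hmin a₁ (Finset.mem_filter.mpr ⟨Finset.mem_univ a₁, by linarith⟩)
    linarith [(Finset.mem_filter.mp ha₁).2]

theorem div_le_or_div_le_of_add_le {a₁ a₂ b₁ b₂ a b : ℝ} (ha₁ : 0 ≤ a₁) (ha₂ : 0 ≤ a₂)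
    (hb₁ : 0 ≤ b₁) (hb₂ : 0 ≤ b₂) (ha : a₁ + a₂ ≤ a) (hb : b₁ + b₂ = b) (hb0 : 0 < b) :
    (0 < b₁ ∧ a₁ / b₁ ≤ a / b) ∨ (0 < b₂ ∧ a₂ / b₂ ≤ a / b) := by
  rcases hb₁.eq_or_lt with rfl | hb₁
  · exact Or.inr ⟨by linarith, by rw [← hb, zero_add]; gcongr; linarith⟩
  rcases hb₂.eq_or_lt with rfl | hb₂
  · exact Or.inl ⟨hb₁, by rw [← hb, add_zero]; gcongr; linarith⟩
  simp only [hb₁, hb₂, true_and, div_le_div_iff₀ hb₁ hb0, div_le_div_iff₀ hb₂ hb0]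
  by_contra! h
  nlinarith

open MeasureTheory in
theorem sum_mul_max_sub_le_of_indicator_le {ι κ : Type*} [Fintype ι] [Fintype κ]
    (p : ι → ℝ) (a b : ι → ℝ) (q : κ → ℝ) (c d : κ → ℝ)
    (h : ∀ t, ∑ i, p i * (Set.Ico (a i) (b i)).indicator 1 t
      ≤ ∑ k, q k * (Set.Ico (c k) (d k)).indicator 1 t) :
    ∑ i, p i * max (b i - a i) 0 ≤ ∑ k, q k * max (d k - c k) 0 := by
  have hint : ∀ x y : ℝ, Integrable ((Set.Ico x y).indicator (1 : ℝ → ℝ)) :=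
    fun x y => (integrable_indicator_iff measurableSet_Ico).2
      (integrableOn_const (by simp [Real.volume_Ico]))
  have hlen : ∀ x y : ℝ, ∫ t, (Set.Ico x y).indicator (1 : ℝ → ℝ) t = max (y - x) 0 := by
    intro x y
    rw [integral_indicator_one measurableSet_Ico, Real.volume_real_Ico]
  have := integral_mono (integrable_finsetSum _ fun i _ => (hint (a i) (b i)).const_mul (p i))
    (integrable_finsetSum _ fun k _ => (hint (c k) (d k)).const_mul (q k)) h
  simpa only [integral_finsetSum _ fun i _ => (hint _ _).const_mul _, integral_const_mul, hlen]
    using this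

theorem sq_posPart_add_sq_negPart (x : ℝ) : x⁺ ^ 2 + x⁻ ^ 2 = x ^ 2 := by
  rcases le_total x 0 with h | h
  · rw [posPart_eq_zero.2 h, negPart_eq_neg.2 h]; ring
  · rw [posPart_eq_self.2 h, negPart_eq_zero.2 h]; ring

theorem sq_posPart_sub_add_sq_posPart_sub_le (a b : ℝ) :
    (a⁺ - b⁺)⁺ ^ 2 + (b⁻ - a⁻)⁺ ^ 2 ≤ (a - b)⁺ ^ 2 := by
  rcases le_total a 0 with ha | ha <;> rcases le_total b 0 with hb | hb <;>
    simp only [posPart_eq_zero.2, negPart_eq_neg.2, posPart_eq_self.2, negPart_eq_zero.2, ha, hb]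
  · simp [neg_add_eq_sub]
  · rw [zero_sub, zero_sub, neg_neg, posPart_eq_zero.2 (neg_nonpos.2 hb), posPart_eq_zero.2 ha]
    linarith [sq_nonneg (a - b)⁺]
  · rw [sub_zero, posPart_eq_self.2 ha, sub_zero, posPart_eq_self.2 (by linarith : 0 ≤ -b),
      posPart_eq_self.2 (by linarith : 0 ≤ a - b)]
    nlinarith
  · simp

theorem exists_ne_zero_sum_mul_eq_zero {α : Type*} [Fintype α] [DecidableEq α] (μ : α → ℝ)
    (hμ : ∀ a, μ a ≠ 0) (hcard : 2 ≤ Fintype.card α) : ∃ f : α → ℝ, f ≠ 0 ∧ ∑ a, μ a * f a = 0 := by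
  obtain ⟨u, v, huv⟩ := Fintype.exists_pair_of_one_lt_card hcard
  refine ⟨Pi.single u (μ v) - Pi.single v (μ u), fun h => hμ v ?_, ?_⟩
  · simpa [huv] using congrFun h u
  · simp [Pi.single_apply, mul_sub, Finset.sum_sub_distrib, mul_comm]

def tailMax (G : DirHyp V E) (f : V → ℝ) (e : E) : ℝ := (G.Tl e).sup' (G.Tl_ne e) f

def headMin (G : DirHyp V E) (f : V → ℝ) (e : E) : ℝ := (G.Hd e).inf' (G.Hd_ne e) f

def discEnergy (G : DirHyp V E) (f : V → ℝ) : ℝ := ∑ e, G.w e * (disc G f e)⁺ ^ 2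

def sqNorm (G : DirHyp V E) (f : V → ℝ) : ℝ := ∑ u, vw G u * f u ^ 2

def DirHyp.reverse (G : DirHyp V E) : DirHyp V E where
  Tl := G.Hd
  Hd := G.Tl
  w := G.w
  Tl_ne := G.Hd_ne
  Hd_ne := G.Tl_ne
  w_nonneg := G.w_nonneg

namespace DirHyp

section

omit [DecidableEq V]

variable (G : DirHyp V E)

theorem disc_eq (f : V → ℝ) (e : E) : disc G f e = tailMax G f e - headMin G f e := rfl

theorem discEnergy_nonneg (f : V → ℝ) : 0 ≤ discEnergy G f :=
  Finset.sum_nonneg fun e _ => mul_nonneg (G.w_nonneg e) (sq_nonneg _)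

theorem disc_sub_const (f : V → ℝ) (c : ℝ) (e : E) : disc G (fun u => f u - c) e = disc G f e := by
  have hmono : Monotone fun x : ℝ => x - c := fun x y h => sub_le_sub_right h c
  have hsup : (G.Tl e).sup' (G.Tl_ne e) (fun u => f u - c) = (G.Tl e).sup' (G.Tl_ne e) f - c :=
    (Finset.apply_sup'_eq_sup'_comp _ (· - c) fun x y => hmono.map_sup x y).symm
  have hinf : (G.Hd e).inf' (G.Hd_ne e) (fun u => f u - c) = (G.Hd e).inf' (G.Hd_ne e) f - c :=
    (Finset.apply_inf'_eq_inf'_comp _ (· - c) fun x y => hmono.map_inf x y).symm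
  rw [disc, disc, hsup, hinf]
  ring

theorem tailMax_posPart (g : V → ℝ) (e : E) : tailMax G g⁺ e = (tailMax G g e)⁺ :=
  (Finset.apply_sup'_eq_sup'_comp _ _ fun x y => posPart_mono.map_sup x y).symm

theorem headMin_posPart (g : V → ℝ) (e : E) : headMin G g⁺ e = (headMin G g e)⁺ :=
  (Finset.apply_inf'_eq_inf'_comp _ _ fun x y => posPart_mono.map_inf x y).symm

theorem tailMax_reverse_negPart (g : V → ℝ) (e : E) :
    tailMax G.reverse g⁻ e = (headMin G g e)⁻ :=
  negPart_anti.finset_sup'_comp _ g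

theorem headMin_reverse_negPart (g : V → ℝ) (e : E) :
    headMin G.reverse g⁻ e = (tailMax G g e)⁻ :=
  negPart_anti.finset_inf'_comp _ g

theorem discEnergy_posPart_add_reverse_negPart_le (g : V → ℝ) :
    discEnergy G g⁺ + discEnergy G.reverse g⁻ ≤ discEnergy G g := by
  simp only [discEnergy, disc_eq, tailMax_posPart, headMin_posPart, tailMax_reverse_negPart,
    headMin_reverse_negPart, ← Finset.sum_add_distrib]
  refine Finset.sum_le_sum fun e _ => ?_
  rw [show G.reverse.w e = G.w e from rfl, ← mul_add]
  exact mul_le_mul_of_nonneg_left (sq_posPart_sub_add_sq_posPart_sub_le _ _) (G.w_nonneg e)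

end

variable (G : DirHyp V E)

theorem discRatio_eq (f : V → ℝ) : discRatio G f = discEnergy G f / sqNorm G f := rfl

theorem vw_nonneg (u : V) : 0 ≤ vw G u :=
  Finset.sum_nonneg fun e _ => by split_ifs <;> simp [G.w_nonneg e]

theorem wS_mono {S T : Finset V} (h : S ⊆ T) : wS G S ≤ wS G T :=
  Finset.sum_le_sum_of_subset_of_nonneg h fun u _ _ => G.vw_nonneg u

theorem wS_pos (hpos : ∀ u, 0 < vw G u) {S : Finset V} (hS : S.Nonempty) : 0 < wS G S :=
  Finset.sum_pos (fun u _ => hpos u) hS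

theorem sqNorm_nonneg (f : V → ℝ) : 0 ≤ sqNorm G f :=
  Finset.sum_nonneg fun u _ => mul_nonneg (G.vw_nonneg u) (sq_nonneg _)

theorem sqNorm_pos (hpos : ∀ u, 0 < vw G u) {f : V → ℝ} (hf : f ≠ 0) : 0 < sqNorm G f := by
  obtain ⟨u, hu⟩ := Function.ne_iff.mp hf
  exact Finset.sum_pos' (fun v _ => mul_nonneg (G.vw_nonneg v) (sq_nonneg _))
    ⟨u, Finset.mem_univ u, mul_pos (hpos u) (pow_two_pos_of_ne_zero hu)⟩

theorem sum_vw_mul (φ : V → ℝ) :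
    ∑ u, vw G u * φ u = ∑ e, G.w e * ∑ u ∈ G.Tl e ∪ G.Hd e, φ u := by
  simp only [vw, Finset.sum_mul, Finset.mul_sum, ite_mul, zero_mul]
  rw [Finset.sum_comm]
  refine Finset.sum_congr rfl fun e _ => ?_
  rw [Finset.sum_ite_mem, Finset.univ_inter]

@[simp] theorem vw_reverse : vw G.reverse = vw G := by
  ext u
  simp only [vw, reverse, Finset.union_comm]

theorem phiPlus_reverse (S : Finset V) : phiPlus G.reverse S = phiMinus G S := by
  rw [phiPlus, phiMinus, wS, wS, vw_reverse]
  simp only [outCut, inCut, reverse, and_comm]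

theorem sqNorm_le_sqNorm_sub_const {f : V → ℝ} (horth : ∑ u, vw G u * f u = 0) (c : ℝ) :
    sqNorm G f ≤ sqNorm G (fun u => f u - c) := by
  have hexpand : ∀ u, vw G u * (f u - c) ^ 2 =
      vw G u * f u ^ 2 - 2 * c * (vw G u * f u) + c ^ 2 * vw G u := fun u => by ring
  simp only [sqNorm, hexpand, Finset.sum_add_distrib, Finset.sum_sub_distrib, ← Finset.mul_sum,
    horth, mul_zero, sub_zero]
  exact le_add_of_nonneg_right
    (mul_nonneg (sq_nonneg c) (Finset.sum_nonneg fun u _ => G.vw_nonneg u))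

theorem discRatio_sub_const_le (hpos : ∀ u, 0 < vw G u) {f : V → ℝ} (hf : f ≠ 0)
    (horth : ∑ u, vw G u * f u = 0) (c : ℝ) :
    discRatio G (fun u => f u - c) ≤ discRatio G f := by
  have henergy : discEnergy G (fun u => f u - c) = discEnergy G f := by
    simp only [discEnergy, G.disc_sub_const]
  rw [discRatio_eq, discRatio_eq, henergy]
  exact div_le_div_of_nonneg_left (G.discEnergy_nonneg f) (G.sqNorm_pos hpos hf)
    (G.sqNorm_le_sqNorm_sub_const horth c)

theorem sqNorm_posPart_add_reverse_negPart (g : V → ℝ) :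
    sqNorm G g⁺ + sqNorm G.reverse g⁻ = sqNorm G g := by
  simp only [sqNorm, vw_reverse, Pi.posPart_apply, Pi.negPart_apply, ← Finset.sum_add_distrib,
    ← mul_add, sq_posPart_add_sq_negPart]

theorem phi_nonneg (S : Finset V) : 0 ≤ phi G S :=
  have hS : 0 ≤ wS G S := Finset.sum_nonneg fun u _ => G.vw_nonneg u
  le_min (div_nonneg (Finset.sum_nonneg fun e _ => G.w_nonneg e) hS)
    (div_nonneg (Finset.sum_nonneg fun e _ => G.w_nonneg e) hS)

theorem discRatio_nonneg (f : V → ℝ) : 0 ≤ discRatio G f :=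
  div_nonneg (G.discEnergy_nonneg f) (G.sqNorm_nonneg f)

theorem sq_tailMax_add_headMin_le (h : V → ℝ) (e : E) :
    (tailMax G h e + headMin G h e) ^ 2 ≤ 4 * ∑ u ∈ G.Tl e ∪ G.Hd e, h u ^ 2 := by
  obtain ⟨u, hu, hmax⟩ := (G.Tl e).exists_mem_eq_sup' (G.Tl_ne e) h
  obtain ⟨v, hv, hmin⟩ := (G.Hd e).exists_mem_eq_inf' (G.Hd_ne e) h
  have hsq : ∀ x ∈ G.Tl e ∪ G.Hd e, h x ^ 2 ≤ ∑ u ∈ G.Tl e ∪ G.Hd e, h u ^ 2 :=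
    fun x hx => Finset.single_le_sum (f := fun u => h u ^ 2) (fun _ _ => sq_nonneg _) hx
  rw [tailMax, headMin, hmax, hmin]
  nlinarith [hsq u (Finset.mem_union_left _ hu), hsq v (Finset.mem_union_right _ hv),
    sq_nonneg (h u - h v)]

theorem sq_sum_posPart_sq_sub_sq_le {h : V → ℝ} (hh : 0 ≤ h) :
    (∑ e, G.w e * (tailMax G h e ^ 2 - headMin G h e ^ 2)⁺) ^ 2
      ≤ 4 * discEnergy G h * sqNorm G h := by
  set A := tailMax G h
  set B := headMin G h
  have hB : ∀ e, 0 ≤ B e := fun e => Finset.le_inf' _ _ fun u _ => hh u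
  have hA : ∀ e, 0 ≤ A e := fun e =>
    (G.Tl_ne e).elim fun u hu => (hh u).trans (Finset.le_sup' h hu)
  have hfactor : ∀ e, G.w e * (A e ^ 2 - B e ^ 2)⁺ ≤ G.w e * ((A e - B e)⁺ * (A e + B e)) := by
    refine fun e => mul_le_mul_of_nonneg_left (max_le ?_ ?_) (G.w_nonneg e)
    · rw [show A e ^ 2 - B e ^ 2 = (A e - B e) * (A e + B e) by ring]
      exact mul_le_mul_of_nonneg_right (le_posPart _) (add_nonneg (hA e) (hB e))
    · exact mul_nonneg (posPart_nonneg _) (add_nonneg (hA e) (hB e))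
  have hcs := Finset.sum_sq_le_sum_mul_sum_of_sq_le_mul univ
    (r := fun e => G.w e * ((A e - B e)⁺ * (A e + B e)))
    (f := fun e => G.w e * (A e - B e)⁺ ^ 2) (g := fun e => G.w e * (A e + B e) ^ 2)
    (fun e _ => mul_nonneg (G.w_nonneg e) (sq_nonneg _))
    (fun e _ => mul_nonneg (G.w_nonneg e) (sq_nonneg _)) (fun e _ => le_of_eq (by ring))
  have hsum : ∑ e, G.w e * (A e + B e) ^ 2 ≤ 4 * sqNorm G h := by
    rw [sqNorm, sum_vw_mul, Finset.mul_sum]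
    exact Finset.sum_le_sum fun e _ => by
      nlinarith [G.sq_tailMax_add_headMin_le h e, G.w_nonneg e]
  have hpos : 0 ≤ ∑ e, G.w e * (A e ^ 2 - B e ^ 2)⁺ :=
    Finset.sum_nonneg fun e _ => mul_nonneg (G.w_nonneg e) (posPart_nonneg _)
  calc (∑ e, G.w e * (A e ^ 2 - B e ^ 2)⁺) ^ 2
      ≤ (∑ e, G.w e * ((A e - B e)⁺ * (A e + B e))) ^ 2 :=
        pow_le_pow_left₀ hpos (Finset.sum_le_sum fun e _ => hfactor e) 2
    _ ≤ discEnergy G h * ∑ e, G.w e * (A e + B e) ^ 2 := hcs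
    _ ≤ 4 * discEnergy G h * sqNorm G h := by
        nlinarith [G.discEnergy_nonneg h]

theorem sum_outCut_superlevel_le {h : V → ℝ} (hh : 0 ≤ h) (t : ℝ) :
    ∑ e ∈ outCut G (univ.filter fun u => 0 ≤ t ∧ t < h u ^ 2), G.w e
      ≤ ∑ e, G.w e * (Set.Ico (headMin G h e ^ 2) (tailMax G h e ^ 2)).indicator 1 t := by
  rw [outCut, Finset.sum_filter]
  refine Finset.sum_le_sum fun e _ => ?_
  split_ifs with hcut
  · obtain ⟨⟨u, hu⟩, ⟨v, hv⟩⟩ := hcut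
    simp only [Finset.mem_inter, Finset.mem_compl, Finset.mem_filter, Finset.mem_univ,
      true_and] at hu hv
    have hB : headMin G h e ^ 2 ≤ h v ^ 2 :=
      pow_le_pow_left₀ (Finset.le_inf' _ _ fun u _ => hh u) (Finset.inf'_le h hv.1) 2
    have hA : h u ^ 2 ≤ tailMax G h e ^ 2 := pow_le_pow_left₀ (hh u) (Finset.le_sup' h hu.1) 2
    have ht : t ∈ Set.Ico (headMin G h e ^ 2) (tailMax G h e ^ 2) := ⟨by grind, by grind⟩
    rw [Set.indicator_of_mem ht, Pi.one_apply, mul_one]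
  · exact mul_nonneg (G.w_nonneg e) (Set.indicator_nonneg (fun _ _ => zero_le_one) t)

theorem mul_sqNorm_le_of_forall_cut {h : V → ℝ} (hh : 0 ≤ h) {r : ℝ}
    (hcut : ∀ T : Finset V, (∀ u ∈ T, 0 < h u) → r * wS G T ≤ ∑ e ∈ outCut G T, G.w e) :
    r * sqNorm G h ≤ ∑ e, G.w e * (tailMax G h e ^ 2 - headMin G h e ^ 2)⁺ := by
  -- layer-cake: integrate the cut inequality over the superlevel sets `{u | t < h u ^ 2}`
  have hlayer := sum_mul_max_sub_le_of_indicator_le (fun u => r * vw G u) (fun _ => 0)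
    (fun u => h u ^ 2) G.w (fun e => headMin G h e ^ 2) (fun e => tailMax G h e ^ 2) fun t => by
      calc ∑ u, r * vw G u * (Set.Ico 0 (h u ^ 2)).indicator 1 t
          = r * wS G (univ.filter fun u => 0 ≤ t ∧ t < h u ^ 2) := by
            simp [wS, Set.indicator_apply, Finset.sum_filter, Finset.mul_sum]
        _ ≤ _ := hcut _ fun u hu => by
            simp only [Finset.mem_filter, Finset.mem_univ, true_and] at hu
            exact lt_of_le_of_ne (hh u) fun h0 => by simp [← h0] at hu; linarith
        _ ≤ _ := G.sum_outCut_superlevel_le hh t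
  calc r * sqNorm G h = ∑ u, r * vw G u * max (h u ^ 2 - 0) 0 := by
        simp [sqNorm, Finset.mul_sum, mul_assoc, sq_nonneg]
    _ ≤ _ := hlayer

theorem le_two_mul_sqrt_discRatio_of_forall_cut {h : V → ℝ} (hh : 0 ≤ h) (hD : 0 < sqNorm G h)
    {r : ℝ} (hr : 0 ≤ r)
    (hcut : ∀ T : Finset V, (∀ u ∈ T, 0 < h u) → r * wS G T ≤ ∑ e ∈ outCut G T, G.w e) :
    r ≤ 2 * √(discRatio G h) := by
  have hrD := pow_le_pow_left₀ (mul_nonneg hr hD.le) (G.mul_sqNorm_le_of_forall_cut hh hcut) 2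
  have : (r / 2) ^ 2 ≤ discRatio G h := by
    rw [discRatio_eq, le_div_iff₀ hD]
    nlinarith [G.sq_sum_posPart_sq_sub_sq_le hh]
  linarith [Real.le_sqrt_of_sq_le this]

theorem exists_phiPlus_le (hpos : ∀ u, 0 < vw G u) {h : V → ℝ} (hh : 0 ≤ h)
    (hD : 0 < sqNorm G h) :
    ∃ S : Finset V, S.Nonempty ∧ (∀ u ∈ S, 0 < h u) ∧ phiPlus G S ≤ 2 * √(discRatio G h) := by
  obtain ⟨u₀, hu₀⟩ : ∃ u, 0 < h u := by
    by_contra! hle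
    have : h = 0 := funext fun u => le_antisymm (hle u) (hh u)
    simp [this, sqNorm] at hD
  set F := univ.filter fun S : Finset V => S.Nonempty ∧ ∀ u ∈ S, 0 < h u
  obtain ⟨S, hSF, hmin⟩ := F.exists_min_image (phiPlus G) ⟨{u₀}, by simp [F, hu₀]⟩
  obtain ⟨hSne, hSpos⟩ := (Finset.mem_filter.1 hSF).2
  refine ⟨S, hSne, hSpos, G.le_two_mul_sqrt_discRatio_of_forall_cut hh hD
    (div_nonneg (Finset.sum_nonneg fun e _ => G.w_nonneg e) (G.wS_pos hpos hSne).le) ?_⟩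
  intro T hT
  rcases T.eq_empty_or_nonempty with rfl | hTne
  · simpa [wS] using Finset.sum_nonneg fun e _ => G.w_nonneg e
  · rw [← le_div_iff₀ (G.wS_pos hpos hTne)]
    exact hmin T (Finset.mem_filter.2 ⟨Finset.mem_univ T, hTne, hT⟩)

theorem exists_phi_le_discRatio (hpos : ∀ u, 0 < vw G u) {f : V → ℝ} (hf : f ≠ 0)
    (horth : ∑ u, vw G u * f u = 0) :
    ∃ S : Finset V, S.Nonempty ∧ S ≠ univ ∧ wS G S ≤ wS G univ / 2 ∧
      phi G S ≤ 2 * √(discRatio G f) := by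
  have : Nonempty V := let ⟨u, _⟩ := Function.ne_iff.1 hf; ⟨u⟩
  obtain ⟨c, hgt, hlt⟩ := exists_weighted_median (vw G) G.vw_nonneg f
  set g : V → ℝ := fun u => f u - c
  have hgD : 0 < sqNorm G g :=
    (G.sqNorm_pos hpos hf).trans_le (G.sqNorm_le_sqNorm_sub_const horth c)
  have hg := G.discRatio_sub_const_le hpos hf horth c
  have hproper : ∀ {S : Finset V}, S.Nonempty → wS G S ≤ wS G univ / 2 → S ≠ univ :=
    fun hS hhalf h => by subst h; linarith [G.wS_pos hpos hS]
  rcases div_le_or_div_le_of_add_le (G.discEnergy_nonneg g⁺) (G.reverse.discEnergy_nonneg g⁻)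
    (G.sqNorm_nonneg g⁺) (G.reverse.sqNorm_nonneg g⁻)
    (G.discEnergy_posPart_add_reverse_negPart_le g) (G.sqNorm_posPart_add_reverse_negPart g) hgD
    with ⟨hD, hle⟩ | ⟨hD, hle⟩
  · obtain ⟨S, hSne, hSpos, hS⟩ := G.exists_phiPlus_le hpos (posPart_nonneg g) hD
    have hsub : S ⊆ univ.filter fun u => c < f u := fun u hu => by
      simpa [g] using posPart_pos_iff.1 (hSpos u hu)
    have hhalf := (G.wS_mono hsub).trans hgt
    refine ⟨S, hSne, hproper hSne hhalf, hhalf, (min_le_left _ _).trans (hS.trans ?_)⟩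
    gcongr
    exact hle.trans hg
  · obtain ⟨S, hSne, hSpos, hS⟩ :=
      G.reverse.exists_phiPlus_le (by simpa using hpos) (negPart_nonneg g) hD
    have hsub : S ⊆ univ.filter fun u => f u < c := fun u hu => by
      simpa [g] using negPart_pos_iff.1 (hSpos u hu)
    rw [phiPlus_reverse] at hS
    have hhalf := (G.wS_mono hsub).trans hlt
    refine ⟨S, hSne, hproper hSne hhalf, hhalf, (min_le_right _ _).trans (hS.trans ?_)⟩
    gcongr
    exact hle.trans hg

end DirHyp

/-- Cheeger upper bound.
There is a nonempty proper `S ⊂ V` with `ω(S) ≤ ω(V)/2` and `φ(S) ≤ 2 √γ₂`;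
in particular `φ_H ≤ 2 √γ₂`. -/
theorem cheeger_upper_bound (G : DirHyp V E) (hpos : ∀ u : V, 0 < vw G u)
    (hcard : 2 ≤ Fintype.card V) :
    ∃ S : Finset V, S.Nonempty ∧ S ≠ Finset.univ ∧
      wS G S ≤ wS G Finset.univ / 2 ∧ phi G S ≤ 2 * Real.sqrt (gamma2 G) := by
  obtain ⟨f₀, hf₀, horth₀⟩ := exists_ne_zero_sum_mul_eq_zero (vw G) (fun u => (hpos u).ne') hcard
  set F := univ.filter fun S : Finset V => S.Nonempty ∧ S ≠ univ ∧ wS G S ≤ wS G univ / 2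
  have hcheeger : ∀ f : V → ℝ, f ≠ 0 → ∑ u, vw G u * f u = 0 →
      ∃ S ∈ F, phi G S ≤ 2 * √(discRatio G f) := fun f hf horth =>
    let ⟨S, hne, huniv, hhalf, hS⟩ := G.exists_phi_le_discRatio hpos hf horth
    ⟨S, Finset.mem_filter.2 ⟨Finset.mem_univ S, hne, huniv, hhalf⟩, hS⟩
  obtain ⟨S₀, hS₀F, hS₀min⟩ := F.exists_min_image (phi G)
    (let ⟨S, hS, _⟩ := hcheeger f₀ hf₀ horth₀; ⟨S, hS⟩)
  obtain ⟨hS₀ne, hS₀univ, hS₀half⟩ := (Finset.mem_filter.1 hS₀F).2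
  refine ⟨S₀, hS₀ne, hS₀univ, hS₀half, ?_⟩
  have hφ : 0 ≤ phi G S₀ / 2 := by linarith [G.phi_nonneg S₀]
  suffices (phi G S₀ / 2) ^ 2 ≤ gamma2 G by linarith [Real.le_sqrt_of_sq_le this]
  refine le_csInf ⟨_, f₀, hf₀, horth₀, rfl⟩ ?_
  rintro _ ⟨f, hf, horth, rfl⟩
  obtain ⟨S, hSF, hS⟩ := hcheeger f hf horth
  exact (Real.le_sqrt hφ (G.discRatio_nonneg f)).1 (by linarith [hS₀min S hSF])
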